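/- Let A be a commutative Banach algebra with a bounded approximate identity of norm bound 1, and let E ∈ A** be a w*-cluster point of such an approximate identity. Then E is a right identity for (A**, □) of norm one, and the closed right ideal E □ A** is isometrically isomorphic as a Banach algebra to LUC(A*)* via the restriction map, where LUC(A*) = A*·A (closed linear span). -/

import Mathlib

open scoped Topology
open Filter

set_option synthInstance.maxHeartbeats 1000000
set_option maxHeartbeats 1000000

noncomputable def fdot {A : Type*} [NonUnitalNormedRing A] [NormedSpace ℂ A]
    [IsScalarTower ℂ A A] [SMulCommClass ℂ A A] (f : A →L[ℂ] ℂ) (a : A) : A →L[ℂ] ℂ :=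
  f.comp (ContinuousLinearMap.mul ℂ A a)

noncomputable def fdotMapA {A : Type*} [NonUnitalNormedRing A] [NormedSpace ℂ A]
    [IsScalarTower ℂ A A] [SMulCommClass ℂ A A] (f : A →L[ℂ] ℂ) : A →L[ℂ] (A →L[ℂ] ℂ) :=
  ((ContinuousLinearMap.compL ℂ A A ℂ) f).comp (ContinuousLinearMap.mul ℂ A)

noncomputable def LUCsub (A : Type*) [NonUnitalNormedRing A] [NormedSpace ℂ A]
    [IsScalarTower ℂ A A] [SMulCommClass ℂ A A] : Submodule ℂ (A →L[ℂ] ℂ) :=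
  (Submodule.span ℂ {g : A →L[ℂ] ℂ | ∃ f a, g = fdot f a}).topologicalClosure

/-!
Evaluating the weak-* cluster point `E` at `φ ∈ A*` gives a cluster point of `φ (u j)`, so
`E φ = lim φ (u j)` whenever this limit exists, and `‖E φ‖ ≤ sup_j ‖φ (u j)‖`.
Since `(f·a)(u j) = f (a u_j) → f a`, `E` acts as a right identity. For `n ∈ A**`,
`(n·(f·a))(u j) = n (f·(a u_j)) → n (f·a)`, so `E □ n` agrees with `n` on the generators of
`LUC(A*)`, hence on all of it: restriction is onto by Hahn–Banach, and it is isometric because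
`‖(E □ n) f‖ ≤ sup_j ‖n (f·u_j)‖` with `f·u_j ∈ LUC(A*)` of norm at most `‖f‖`.
-/

theorem sSup_norm_apply_mem_closedBall_eq_norm_comp_subtypeL {𝕜 F : Type*}
    [DenselyNormedField 𝕜] [NormedAddCommGroup F] [NormedSpace 𝕜 F] (p : Submodule 𝕜 F)
    (m : F →L[𝕜] 𝕜) :
    sSup {r : ℝ | ∃ f ∈ p, ‖f‖ ≤ 1 ∧ r = ‖m f‖} = ‖m.comp p.subtypeL‖ := by
  rw [← ContinuousLinearMap.sSup_unitClosedBall_eq_norm]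
  congr 1
  ext r
  simp only [Set.mem_ofPred_eq, Set.mem_image, Metric.mem_closedBall, dist_zero_right,
    ContinuousLinearMap.comp_apply, Submodule.subtypeL_apply, Subtype.exists,
    Submodule.coe_norm, exists_prop]
  exact ⟨fun ⟨f, hf, hf1, hr⟩ => ⟨f, hf, hf1, hr.symm⟩, fun ⟨f, hf, hf1, hr⟩ => ⟨f, hf, hf1, hr.symm⟩⟩

theorem sSup_norm_apply_mem_closedBall_eq_norm {𝕜 F : Type*} [DenselyNormedField 𝕜]
    [NormedAddCommGroup F] [NormedSpace 𝕜 F] (p : Submodule 𝕜 F) (m : F →L[𝕜] 𝕜)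
    (h : ∀ C, 0 ≤ C → (∀ x ∈ p, ‖m x‖ ≤ C * ‖x‖) → ∀ f, ‖m f‖ ≤ C * ‖f‖) :
    sSup {r : ℝ | ∃ f ∈ p, ‖f‖ ≤ 1 ∧ r = ‖m f‖} = ‖m‖ := by
  rw [sSup_norm_apply_mem_closedBall_eq_norm_comp_subtypeL]
  refine le_antisymm ((m.opNorm_comp_le _).trans
    (mul_le_of_le_one_right (norm_nonneg _) (Submodule.norm_subtypeL_le _))) ?_
  exact m.opNorm_le_bound (norm_nonneg _)
    (h _ (norm_nonneg _) fun x hx => (m.comp p.subtypeL).le_opNorm ⟨x, hx⟩)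

section ArensProduct

variable {A : Type*} [NonUnitalNormedRing A] [NormedSpace ℂ A] [IsScalarTower ℂ A A]
  [SMulCommClass ℂ A A]

@[simp]
theorem fdot_apply (f : A →L[ℂ] ℂ) (a x : A) : fdot f a x = f (a * x) := rfl

@[simp]
theorem fdotMapA_apply (f : A →L[ℂ] ℂ) (a : A) : fdotMapA f a = fdot f a := rfl

theorem fdot_fdot (f : A →L[ℂ] ℂ) (a b : A) : fdot (fdot f a) b = fdot f (a * b) := by
  ext x
  simp only [fdot_apply, mul_assoc]

theorem norm_fdot_le (f : A →L[ℂ] ℂ) (a : A) : ‖fdot f a‖ ≤ ‖f‖ * ‖a‖ :=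
  (f.opNorm_comp_le _).trans
    (mul_le_mul_of_nonneg_left (ContinuousLinearMap.opNorm_mul_apply_le ℂ A a) (norm_nonneg f))

theorem fdot_mem_LUCsub (f : A →L[ℂ] ℂ) (a : A) : fdot f a ∈ LUCsub A :=
  Submodule.le_topologicalClosure _ (Submodule.subset_span ⟨f, a, rfl⟩)

variable (A) in
noncomputable def fdotMapL : (A →L[ℂ] ℂ) →L[ℂ] A →L[ℂ] (A →L[ℂ] ℂ) :=
  ((ContinuousLinearMap.compL ℂ A (A →L[ℂ] A) (A →L[ℂ] ℂ)).flip
    (ContinuousLinearMap.mul ℂ A)).comp (ContinuousLinearMap.compL ℂ A A ℂ)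

@[simp]
theorem fdotMapL_apply (f : A →L[ℂ] ℂ) : fdotMapL A f = fdotMapA f := rfl

/-- The first Arens product `m □ n`; `n.comp (fdotMapA f)` is the functional `n·f` on `A`. -/
noncomputable def arensProd (m n : (A →L[ℂ] ℂ) →L[ℂ] ℂ) : (A →L[ℂ] ℂ) →L[ℂ] ℂ :=
  m.comp ((ContinuousLinearMap.compL ℂ A (A →L[ℂ] ℂ) ℂ n).comp (fdotMapL A))

@[simp]
theorem arensProd_apply (m n : (A →L[ℂ] ℂ) →L[ℂ] ℂ) (f : A →L[ℂ] ℂ) :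
    arensProd m n f = m (n.comp (fdotMapA f)) := rfl

end ArensProduct

def WeakStarMapClusterPt {X ι : Type*} [NormedAddCommGroup X] [NormedSpace ℂ X]
    (E : (X →L[ℂ] ℂ) →L[ℂ] ℂ) (l : Filter ι) (u : ι → X) : Prop :=
  MapClusterPt (show WeakDual ℂ (X →L[ℂ] ℂ) from E) l
    (fun j => (NormedSpace.inclusionInDoubleDual ℂ X (u j) : WeakDual ℂ (X →L[ℂ] ℂ)))

namespace WeakStarMapClusterPt

section NormedSpace

variable {X ι : Type*} [NormedAddCommGroup X] [NormedSpace ℂ X] {E : (X →L[ℂ] ℂ) →L[ℂ] ℂ}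
  {l : Filter ι} {u : ι → X}

theorem mapClusterPt_apply (hE : WeakStarMapClusterPt E l u) (φ : X →L[ℂ] ℂ) :
    MapClusterPt (E φ) l (fun j => φ (u j)) :=
  MapClusterPt.continuousAt_comp (f := fun x : WeakDual ℂ (X →L[ℂ] ℂ) => x φ)
    (WeakDual.eval_continuous φ).continuousAt hE

theorem apply_eq_of_tendsto (hE : WeakStarMapClusterPt E l u) {φ : X →L[ℂ] ℂ} {c : ℂ}
    (hc : Tendsto (fun j => φ (u j)) l (𝓝 c)) : E φ = c :=
  eq_of_nhds_neBot (ClusterPt.mono (hE.mapClusterPt_apply φ) hc).neBot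

theorem norm_apply_le (hE : WeakStarMapClusterPt E l u) {φ : X →L[ℂ] ℂ} {c : ℝ}
    (hc : ∀ j, ‖φ (u j)‖ ≤ c) : ‖E φ‖ ≤ c :=
  (isClosed_le continuous_norm continuous_const).mem_of_mapClusterPt (hE.mapClusterPt_apply φ)
    (Eventually.of_forall hc)

theorem norm_le_one (hE : WeakStarMapClusterPt E l u) (hu : ∀ j, ‖u j‖ ≤ 1) : ‖E‖ ≤ 1 :=
  E.opNorm_le_bound zero_le_one fun φ => by
    rw [one_mul]
    exact hE.norm_apply_le fun j => φ.le_of_opNorm_le_of_le le_rfl (hu j) |>.trans_eq (mul_one _)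

end NormedSpace

variable {A ι : Type*} [NonUnitalNormedRing A] [NormedSpace ℂ A] [IsScalarTower ℂ A A]
  [SMulCommClass ℂ A A] {E : (A →L[ℂ] ℂ) →L[ℂ] ℂ} {l : Filter ι} {u : ι → A}

theorem apply_fdot (hE : WeakStarMapClusterPt E l u)
    (hu : ∀ a, Tendsto (fun j => a * u j) l (𝓝 a)) (f : A →L[ℂ] ℂ) (a : A) :
    E (fdot f a) = f a :=
  hE.apply_eq_of_tendsto ((f.continuous.tendsto a).comp (hu a))

theorem comp_fdotMapA (hE : WeakStarMapClusterPt E l u)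
    (hu : ∀ a, Tendsto (fun j => a * u j) l (𝓝 a)) (f : A →L[ℂ] ℂ) :
    E.comp (fdotMapA f) = f :=
  ContinuousLinearMap.ext (hE.apply_fdot hu f)

theorem one_le_norm [Nontrivial A] (hE : WeakStarMapClusterPt E l u)
    (hu : ∀ a, Tendsto (fun j => a * u j) l (𝓝 a)) : 1 ≤ ‖E‖ := by
  obtain ⟨a, ha⟩ := exists_ne (0 : A)
  obtain ⟨f, hf, hfa⟩ := exists_dual_vector ℂ a (norm_ne_zero_iff.2 ha)
  have : ‖a‖ * 1 ≤ ‖a‖ * ‖E‖ := calc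
    ‖a‖ * 1 = ‖E (fdot f a)‖ := by simp [hE.apply_fdot hu, hfa]
    _ ≤ ‖E‖ * (‖f‖ * ‖a‖) := E.le_of_opNorm_le_of_le le_rfl (norm_fdot_le f a)
    _ = ‖a‖ * ‖E‖ := by rw [hf]; ring
  exact le_of_mul_le_mul_left this (norm_pos_iff.2 ha)

theorem arensProd_apply_fdot (hE : WeakStarMapClusterPt E l u)
    (hu : ∀ a, Tendsto (fun j => a * u j) l (𝓝 a)) (n : (A →L[ℂ] ℂ) →L[ℂ] ℂ)
    (f : A →L[ℂ] ℂ) (a : A) : arensProd E n (fdot f a) = n (fdot f a) := by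
  refine hE.apply_eq_of_tendsto (φ := n.comp (fdotMapA (fdot f a))) ?_
  simp only [ContinuousLinearMap.comp_apply, fdotMapA_apply, fdot_fdot]
  exact ((n.continuous.comp (fdotMapA f).continuous).tendsto a).comp (hu a)

theorem arensProd_apply_of_mem_LUCsub (hE : WeakStarMapClusterPt E l u)
    (hu : ∀ a, Tendsto (fun j => a * u j) l (𝓝 a)) (n : (A →L[ℂ] ℂ) →L[ℂ] ℂ)
    {h : A →L[ℂ] ℂ} (hh : h ∈ LUCsub A) : arensProd E n h = n h := by
  have hgen : Submodule.span ℂ {g : A →L[ℂ] ℂ | ∃ f a, g = fdot f a} ≤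
      LinearMap.eqLocus (arensProd E n : (A →L[ℂ] ℂ) →ₗ[ℂ] ℂ) n :=
    Submodule.span_le.2 (by rintro _ ⟨f, a, rfl⟩; exact hE.arensProd_apply_fdot hu n f a)
  exact Submodule.topologicalClosure_minimal _ hgen
    (isClosed_eq (arensProd E n).continuous n.continuous) hh

theorem norm_arensProd_apply_le (hE : WeakStarMapClusterPt E l u)
    (hu : ∀ a, Tendsto (fun j => a * u j) l (𝓝 a)) (hu1 : ∀ j, ‖u j‖ ≤ 1)
    (n : (A →L[ℂ] ℂ) →L[ℂ] ℂ) {C : ℝ} (hC0 : 0 ≤ C)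
    (hC : ∀ x ∈ LUCsub A, ‖arensProd E n x‖ ≤ C * ‖x‖) (f : A →L[ℂ] ℂ) :
    ‖arensProd E n f‖ ≤ C * ‖f‖ := by
  refine hE.norm_apply_le fun j => ?_
  have hmem := fdot_mem_LUCsub f (u j)
  calc ‖n (fdot f (u j))‖ = ‖arensProd E n (fdot f (u j))‖ := by
        rw [hE.arensProd_apply_of_mem_LUCsub hu n hmem]
    _ ≤ C * (‖f‖ * ‖u j‖) := (hC _ hmem).trans (by gcongr; exact norm_fdot_le f (u j))
    _ ≤ C * ‖f‖ := by gcongr; exact mul_le_of_le_one_right (norm_nonneg f) (hu1 j)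

theorem exists_arensProd_comp_subtypeL_eq (hE : WeakStarMapClusterPt E l u)
    (hu : ∀ a, Tendsto (fun j => a * u j) l (𝓝 a)) (n' : LUCsub A →L[ℂ] ℂ) :
    ∃ n, (arensProd E n).comp (LUCsub A).subtypeL = n' := by
  obtain ⟨n, hn, -⟩ := exists_extension_norm_eq (LUCsub A) n'
  exact ⟨n, ContinuousLinearMap.ext fun h =>
    (hE.arensProd_apply_of_mem_LUCsub hu n h.2).trans (hn h)⟩

end WeakStarMapClusterPt

theorem stmt17_general {A : Type*} [NonUnitalNormedCommRing A] [NormedSpace ℂ A]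
    [IsScalarTower ℂ A A] [SMulCommClass ℂ A A] [Nontrivial A]
    {ι : Type*} (l : Filter ι) (u : ι → A)
    (hu1 : ∀ j, ‖u j‖ ≤ 1)
    (hai : ∀ a : A, Tendsto (fun j => u j * a) l (𝓝 a))
    (E : (A →L[ℂ] ℂ) →L[ℂ] ℂ)
    (hE : MapClusterPt (show WeakDual ℂ (A →L[ℂ] ℂ) from E) l
      (fun j => (NormedSpace.inclusionInDoubleDual ℂ A (u j) : WeakDual ℂ (A →L[ℂ] ℂ)))) :
    ‖E‖ = 1 ∧
    (∀ f : A →L[ℂ] ℂ, E.comp (fdotMapA f) = f) ∧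
    -- the restriction map E □ A** → LUC(A*)* is isometric ...
    (∀ m : (A →L[ℂ] ℂ) →L[ℂ] ℂ,
      (∃ n : (A →L[ℂ] ℂ) →L[ℂ] ℂ, ∀ f, m f = E (n.comp (fdotMapA f))) →
      sSup {r : ℝ | ∃ f ∈ LUCsub A, ‖f‖ ≤ 1 ∧ r = ‖m f‖} = ‖m‖) ∧
    -- ... and surjective: every functional on LUC(A*) is the restriction of an
    -- element of E □ A**
    (∀ n' : ↥(LUCsub A) →L[ℂ] ℂ,
      ∃ m : (A →L[ℂ] ℂ) →L[ℂ] ℂ,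
        (∃ n : (A →L[ℂ] ℂ) →L[ℂ] ℂ, ∀ f, m f = E (n.comp (fdotMapA f))) ∧
        m.comp (LUCsub A).subtypeL = n') := by
  have hu : ∀ a, Tendsto (fun j => a * u j) l (𝓝 a) := fun a => by
    simpa only [mul_comm] using hai a
  have hE' : WeakStarMapClusterPt E l u := hE
  refine ⟨le_antisymm (hE'.norm_le_one hu1) (hE'.one_le_norm hu), hE'.comp_fdotMapA hu, ?_, ?_⟩
  · rintro m ⟨n, hm⟩
    obtain rfl : m = arensProd E n := ContinuousLinearMap.ext hm
    exact sSup_norm_apply_mem_closedBall_eq_norm _ _ fun C hC0 hC =>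
      hE'.norm_arensProd_apply_le hu hu1 n hC0 hC
  · intro n'
    obtain ⟨n, hn⟩ := hE'.exists_arensProd_comp_subtypeL_eq hu n'
    exact ⟨arensProd E n, ⟨n, fun f => rfl⟩, hn⟩

/-- Let A be a commutative Banach algebra with an approximate identity bounded
by one and let E be a w*-cluster point of it in A**.  Then E is a right identity
of norm one for the first Arens product (E·f = f for all f, hence m □ E = m),
and the closed right ideal E □ A** is isometrically isomorphic to LUC(A*)* via
the restriction map. -/
theorem stmt17 {A : Type*} [NonUnitalNormedCommRing A] [NormedSpace ℂ A]
    [IsScalarTower ℂ A A] [SMulCommClass ℂ A A] [CompleteSpace A] [Nontrivial A]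
    {ι : Type*} (l : Filter ι) [l.NeBot] (u : ι → A)
    (hu1 : ∀ j, ‖u j‖ ≤ 1)
    (hai : ∀ a : A, Tendsto (fun j => u j * a) l (𝓝 a))
    (E : (A →L[ℂ] ℂ) →L[ℂ] ℂ)
    (hE : MapClusterPt (show WeakDual ℂ (A →L[ℂ] ℂ) from E) l
      (fun j => (NormedSpace.inclusionInDoubleDual ℂ A (u j) : WeakDual ℂ (A →L[ℂ] ℂ)))) :
    ‖E‖ = 1 ∧
    (∀ f : A →L[ℂ] ℂ, E.comp (fdotMapA f) = f) ∧
    -- the restriction map E □ A** → LUC(A*)* is isometric ...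
    (∀ m : (A →L[ℂ] ℂ) →L[ℂ] ℂ,
      (∃ n : (A →L[ℂ] ℂ) →L[ℂ] ℂ, ∀ f, m f = E (n.comp (fdotMapA f))) →
      sSup {r : ℝ | ∃ f ∈ LUCsub A, ‖f‖ ≤ 1 ∧ r = ‖m f‖} = ‖m‖) ∧
    -- ... and surjective: every functional on LUC(A*) is the restriction of an
    -- element of E □ A**
    (∀ n' : ↥(LUCsub A) →L[ℂ] ℂ,
      ∃ m : (A →L[ℂ] ℂ) →L[ℂ] ℂ,
        (∃ n : (A →L[ℂ] ℂ) →L[ℂ] ℂ, ∀ f, m f = E (n.comp (fdotMapA f))) ∧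
        m.comp (LUCsub A).subtypeL = n') :=
  stmt17_general l u hu1 hai E hE
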